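/- Let (κ,ρ) ∈ W and let (a,b,m,n) be an element of ABMN(κ,ρ). Then: (1) for every i ∈ ℤ, m_{i+1} > m_i and n_i > n_{i+1}; and (2) the limits m_{−∞} = lim_{k→∞} m_{−k}, m_∞ = lim_{k→∞} m_k, n_{−∞} = lim_{k→∞} n_{−k} and n_∞ = lim_{k→∞} n_k exist as finite real numbers and satisfy m_∞ > m_{−∞} and n_{−∞} > n_∞. -/
import Mathlib

open Real Filter Set

noncomputable section

/-- The ABMN(κ,ρ) system on ℤ: a quadruple of sequences `(a,b,m,n)` with `a,b` positive
satisfying the four ABMN equations at every integer index. -/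
def ABMN (κ ρ : ℝ) (a b m n : ℤ → ℝ) : Prop :=
  (∀ i : ℤ, 0 < a i) ∧ (∀ i : ℤ, 0 < b i) ∧
    ∀ i : ℤ,
      2 * (a i ^ ρ + b i ^ ρ) * (m i + a i)
          = (a i ^ ρ * (1 - κ) + b i ^ ρ * (1 + κ)) * m (i - 1)
            + (a i ^ ρ * (1 + κ) + b i ^ ρ * (1 - κ)) * m (i + 1) ∧
      2 * (a i ^ ρ + b i ^ ρ) * (n i + b i)
          = (a i ^ ρ * (1 - κ) + b i ^ ρ * (1 + κ)) * n (i - 1)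
            + (a i ^ ρ * (1 + κ) + b i ^ ρ * (1 - κ)) * n (i + 1) ∧
      (a i ^ ρ + b i ^ ρ) ^ 2 = ρ * κ * a i ^ (ρ - 1) * b i ^ ρ * (m (i + 1) - m (i - 1)) ∧
      (a i ^ ρ + b i ^ ρ) ^ 2 = ρ * κ * a i ^ ρ * b i ^ (ρ - 1) * (n (i - 1) - n (i + 1))

/-- auxiliary polynomials -/
def Ph (κ ρ s : ℝ) : ℝ := (1+κ) + 2*(1-ρ*κ)*s + (1-κ)*s^2
def Qh (κ ρ s : ℝ) : ℝ := (1-κ) + 2*(1+ρ*κ)*s + (1+κ)*s^2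
def Rh (κ ρ s : ℝ) : ℝ := (1+κ) + 2*(1+ρ*κ)*s + (1-κ)*s^2
def Th (κ ρ s : ℝ) : ℝ := (1-κ) + 2*(1-ρ*κ)*s + (1+κ)*s^2

lemma Ph_pos {κ ρ s : ℝ} (hκ0 : 0 < κ) (hκ1 : κ ≤ 1) (hρκ : ρ*κ ≤ 1) (hs : 0 < s) :
    0 < Ph κ ρ s := by unfold Ph; nlinarith [sq_nonneg s]
lemma Qh_pos {κ ρ s : ℝ} (hκ0 : 0 < κ) (hκ1 : κ ≤ 1) (hρ : 0 < ρ) (hs : 0 < s) :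
    0 < Qh κ ρ s := by unfold Qh; nlinarith [sq_nonneg s, mul_pos hρ hκ0, mul_pos hs hs]
lemma Rh_pos {κ ρ s : ℝ} (hκ0 : 0 < κ) (hκ1 : κ ≤ 1) (hρ : 0 < ρ) (hs : 0 < s) :
    0 < Rh κ ρ s := by unfold Rh; nlinarith [sq_nonneg s, mul_pos hρ hκ0, mul_pos hs hs]
lemma Th_pos {κ ρ s : ℝ} (hκ0 : 0 < κ) (hκ1 : κ ≤ 1) (hρκ : ρ*κ ≤ 1) (hs : 0 < s) :
    0 < Th κ ρ s := by unfold Th; nlinarith [mul_pos hs hs]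

lemma rhok_le_one {κ ρ : ℝ} (hκ0 : 0 < κ) (hκ1 : κ ≤ 1) (hρ : 0 < ρ) (hW : ρ ^ 2 * κ ≤ 1) :
    ρ * κ ≤ 1 := by
  have h2 : (ρ*κ)^2 ≤ 1 := by nlinarith
  nlinarith [mul_pos hρ hκ0]

lemma abmn_main (κ ρ : ℝ) (hκ0 : 0 < κ) (hκ1 : κ ≤ 1) (hρ : 0 < ρ)
    (a b m n : ℤ → ℝ) (h : ABMN κ ρ a b m n) (i : ℤ) :
    0 < m (i + 1) - m i ∧ 0 < n (i - 1) - n i ∧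
    Ph κ ρ ((b i / a i) ^ ρ) * (m (i + 1) - m i) = Qh κ ρ ((b i / a i) ^ ρ) * (m i - m (i - 1)) ∧
    Rh κ ρ ((b i / a i) ^ ρ) * (n i - n (i + 1)) = Th κ ρ ((b i / a i) ^ ρ) * (n (i - 1) - n i) ∧
    b i * Rh κ ρ ((b i / a i) ^ ρ) * (m i - m (i - 1))
      = a i * Ph κ ρ ((b i / a i) ^ ρ) * (n (i - 1) - n i) ∧
    b i * Th κ ρ ((b i / a i) ^ ρ) * (m (i + 1) - m i)
      = a i * Qh κ ρ ((b i / a i) ^ ρ) * (n i - n (i + 1)) := by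
  obtain ⟨ha, hb, he⟩ := h
  obtain ⟨e1, e2, e3, e4⟩ := he i
  have ht : (b i / a i) ^ ρ = b i ^ ρ / a i ^ ρ := Real.div_rpow (hb i).le (ha i).le ρ
  rw [ht]
  have hA : (0:ℝ) < a i ^ ρ := Real.rpow_pos_of_pos (ha i) ρ
  have hB : (0:ℝ) < b i ^ ρ := Real.rpow_pos_of_pos (hb i) ρ
  have haρ1 : a i ^ (ρ - 1) * a i = a i ^ ρ := by
    rw [← Real.rpow_add_one (ha i).ne' (ρ - 1), sub_add_cancel]
  have hbρ1 : b i ^ (ρ - 1) * b i = b i ^ ρ := by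
    rw [← Real.rpow_add_one (hb i).ne' (ρ - 1), sub_add_cancel]
  set A := a i ^ ρ with hAdef
  set B := b i ^ ρ with hBdef
  -- multiplied versions of e3, e4
  have e3m : a i * (A + B)^2 = ρ*κ*A*B*(m (i+1) - m (i-1)) := by
    linear_combination a i * e3 + ρ*κ*B*(m (i+1) - m (i-1)) * haρ1
  have e4m : b i * (A + B)^2 = ρ*κ*A*B*(n (i-1) - n (i+1)) := by
    linear_combination b i * e4 + ρ*κ*A*(n (i-1) - n (i+1)) * hbρ1
  have hc : 0 < ρ*κ*A*B := by
    have := mul_pos (mul_pos (mul_pos hρ hκ0) hA) hB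
    linarith [this]
  have hS : 0 < a i * (A+B)^2 := by
    have : (0:ℝ) < (A+B)^2 := by positivity
    exact mul_pos (ha i) this
  have hSb : 0 < b i * (A+B)^2 := by
    have : (0:ℝ) < (A+B)^2 := by positivity
    exact mul_pos (hb i) this
  have hΔM : 0 < m (i+1) - m (i-1) := by
    by_contra hcon; push_neg at hcon
    have := mul_nonpos_of_nonneg_of_nonpos hc.le hcon
    linarith [e3m, hS]
  have hΔN : 0 < n (i-1) - n (i+1) := by
    by_contra hcon; push_neg at hcon
    have := mul_nonpos_of_nonneg_of_nonpos hc.le hcon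
    linarith [e4m, hSb]
  have hAB : 0 < A + B := by linarith
  -- D_i > 0
  have key1 : 2*(A+B)*(m (i+1) - m i) = (A*(1-κ)+B*(1+κ))*(m (i+1) - m (i-1)) + 2*(A+B)*(a i) := by
    linear_combination -e1
  have hc1 : 0 < A*(1-κ)+B*(1+κ) := by
    have h1 := mul_nonneg hA.le (by linarith : (0:ℝ) ≤ 1-κ)
    have h2 := mul_pos hB (by linarith : (0:ℝ) < 1+κ)
    linarith
  have hD : 0 < m (i+1) - m i := by
    have h' : 0 < 2*(A+B)*(m (i+1) - m i) := by
      rw [key1]; have := mul_pos hc1 hΔM; have := mul_pos hAB (ha i); linarith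
    by_contra hcon; push_neg at hcon
    have h2 := mul_nonpos_of_nonneg_of_nonpos (by linarith : (0:ℝ) ≤ 2*(A+B)) hcon
    linarith
  -- E_{i-1} > 0
  have key2 : 2*(A+B)*(n (i-1) - n i) = (A*(1+κ)+B*(1-κ))*(n (i-1) - n (i+1)) + 2*(A+B)*(b i) := by
    linear_combination -e2
  have hc2 : 0 < A*(1+κ)+B*(1-κ) := by
    have h1 := mul_pos hA (by linarith : (0:ℝ) < 1+κ)
    have h2 := mul_nonneg hB.le (by linarith : (0:ℝ) ≤ 1-κ)
    linarith
  have hE : 0 < n (i-1) - n i := by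
    have h' : 0 < 2*(A+B)*(n (i-1) - n i) := by
      rw [key2]; have := mul_pos hc2 hΔN; have := mul_pos hAB (hb i); linarith
    by_contra hcon; push_neg at hcon
    have h2 := mul_nonpos_of_nonneg_of_nonpos (by linarith : (0:ℝ) ≤ 2*(A+B)) hcon
    linarith
  have hPQ0 : ((1+κ)*A^2 + 2*(1-ρ*κ)*A*B + (1-κ)*B^2) * (m (i+1) - m i)
      = ((1-κ)*A^2 + 2*(1+ρ*κ)*A*B + (1+κ)*B^2) * (m i - m (i-1)) := by
    linear_combination 2*e3m - (A+B)*e1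
  have hRT0 : ((1+κ)*A^2 + 2*(1+ρ*κ)*A*B + (1-κ)*B^2) * (n i - n (i+1))
      = ((1-κ)*A^2 + 2*(1-ρ*κ)*A*B + (1+κ)*B^2) * (n (i-1) - n i) := by
    linear_combination (A+B)*e2 - 2*e4m
  have h5' : ρ*κ*A*B*(b i*(m (i+1) - m (i-1))) = ρ*κ*A*B*(a i*(n (i-1) - n (i+1))) := by
    linear_combination a i * e4m - b i * e3m
  have h5 : b i*(m (i+1) - m (i-1)) = a i*(n (i-1) - n (i+1)) :=
    mul_left_cancel₀ hc.ne' h5'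
  have hA2 : (A:ℝ)^2 ≠ 0 := by positivity
  have hPh : A^2 * Ph κ ρ (B/A) = (1+κ)*A^2 + 2*(1-ρ*κ)*A*B + (1-κ)*B^2 := by
    unfold Ph; field_simp
  have hQh : A^2 * Qh κ ρ (B/A) = (1-κ)*A^2 + 2*(1+ρ*κ)*A*B + (1+κ)*B^2 := by
    unfold Qh; field_simp
  have hRh : A^2 * Rh κ ρ (B/A) = (1+κ)*A^2 + 2*(1+ρ*κ)*A*B + (1-κ)*B^2 := by
    unfold Rh; field_simp
  have hTh : A^2 * Th κ ρ (B/A) = (1-κ)*A^2 + 2*(1-ρ*κ)*A*B + (1+κ)*B^2 := by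
    unfold Th; field_simp
  have hS2 : (2*(A+B)^2 : ℝ) ≠ 0 := by positivity
  -- scaled recursions
  have recm : Ph κ ρ (B/A) * (m (i+1) - m i) = Qh κ ρ (B/A) * (m i - m (i-1)) := by
    apply mul_left_cancel₀ hA2
    linear_combination (m (i+1) - m i) * hPh + hPQ0 - (m i - m (i-1)) * hQh
  have recn : Rh κ ρ (B/A) * (n i - n (i+1)) = Th κ ρ (B/A) * (n (i-1) - n i) := by
    apply mul_left_cancel₀ hA2
    linear_combination (n i - n (i+1)) * hRh + hRT0 - (n (i-1) - n i) * hTh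
  -- unscaled cross identities
  have hcr1 : 2*(A+B)^2 * (b i * ((1+κ)*A^2 + 2*(1+ρ*κ)*A*B + (1-κ)*B^2) * (m i - m (i-1)))
      = 2*(A+B)^2 * (a i * ((1+κ)*A^2 + 2*(1-ρ*κ)*A*B + (1-κ)*B^2) * (n (i-1) - n i)) := by
    linear_combination (-(b i)*((1+κ)*A^2 + 2*(1+ρ*κ)*A*B + (1-κ)*B^2))*hPQ0
      + ((1+κ)*A^2 + 2*(1-ρ*κ)*A*B + (1-κ)*B^2)*((1+κ)*A^2 + 2*(1+ρ*κ)*A*B + (1-κ)*B^2)*h5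
      + (a i)*((1+κ)*A^2 + 2*(1-ρ*κ)*A*B + (1-κ)*B^2)*hRT0
  have hcr2 : 2*(A+B)^2 * (b i * ((1-κ)*A^2 + 2*(1-ρ*κ)*A*B + (1+κ)*B^2) * (m (i+1) - m i))
      = 2*(A+B)^2 * (a i * ((1-κ)*A^2 + 2*(1+ρ*κ)*A*B + (1+κ)*B^2) * (n i - n (i+1))) := by
    linear_combination ((b i)*((1-κ)*A^2 + 2*(1-ρ*κ)*A*B + (1+κ)*B^2))*hPQ0
      + ((1-κ)*A^2 + 2*(1-ρ*κ)*A*B + (1+κ)*B^2)*((1-κ)*A^2 + 2*(1+ρ*κ)*A*B + (1+κ)*B^2)*h5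
      - (a i)*((1-κ)*A^2 + 2*(1+ρ*κ)*A*B + (1+κ)*B^2)*hRT0
  have hcr1' := mul_left_cancel₀ hS2 hcr1
  have hcr2' := mul_left_cancel₀ hS2 hcr2
  have crossm : b i * Rh κ ρ (B/A) * (m i - m (i-1)) = a i * Ph κ ρ (B/A) * (n (i-1) - n i) := by
    apply mul_left_cancel₀ hA2
    linear_combination (b i * (m i - m (i-1))) * hRh + hcr1' - (a i * (n (i-1) - n i)) * hPh
  have crossn : b i * Th κ ρ (B/A) * (m (i+1) - m i) = a i * Qh κ ρ (B/A) * (n i - n (i+1)) := by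
    apply mul_left_cancel₀ hA2
    linear_combination (b i * (m (i+1) - m i)) * hTh + hcr2' - (a i * (n i - n (i+1))) * hQh
  exact ⟨hD, hE, recm, recn, crossm, crossn⟩

lemma int_mono {f : ℤ → ℝ} (h : ∀ i, f i < f (i+1)) : ∀ i j : ℤ, i ≤ j → f i ≤ f j := by
  intro i j hij
  obtain ⟨d, rfl⟩ : ∃ d : ℕ, j = i + d := ⟨(j - i).toNat, by omega⟩
  clear hij
  induction d with
  | zero => simp
  | succ d ih =>
    have h2 := h (i + d)
    have : i + ((d:ℤ)+1) = (i + d) + 1 := by ring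
    push_cast
    rw [this]
    push_cast at ih
    linarith

lemma conv_fwd {f : ℤ → ℝ} {q : ℝ} (hq0 : 0 ≤ q) (hq1 : q < 1) (K : ℕ)
    (hmono : ∀ i : ℤ, f i < f (i+1))
    (hdec : ∀ i : ℤ, (K:ℤ) ≤ i → f (i+1) - f i ≤ q * (f i - f (i-1))) :
    ∃ l, Tendsto (fun k : ℕ => f (k : ℤ)) atTop (nhds l) ∧ ∀ k : ℕ, f (k:ℤ) ≤ l := by
  have hmono' := int_mono hmono
  have h1q : 0 < 1 - q := by linarith
  -- potential function
  set Φ : ℕ → ℝ := fun j => f ((K:ℤ) + j) + (f ((K:ℤ) + j + 1) - f ((K:ℤ) + j)) / (1 - q) with hΦ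
  have hΦanti : ∀ j : ℕ, Φ (j+1) ≤ Φ j := by
    intro j
    have hd := hdec ((K:ℤ) + j + 1) (by omega)
    have harr : (K:ℤ) + j + 1 - 1 = (K:ℤ) + j := by ring
    rw [harr] at hd
    have hDpos := hmono ((K:ℤ) + j)
    simp only [hΦ]
    have hcast : (K:ℤ) + ((j:ℤ)+1) = (K:ℤ) + j + 1 := by ring
    push_cast
    rw [hcast]
    rw [← sub_nonpos]
    have h2 : f ((K:ℤ) + j + 1) + (f ((K:ℤ) + j + 1 + 1) - f ((K:ℤ) + j + 1))/(1-q)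
        - (f ((K:ℤ) + j) + (f ((K:ℤ) + j + 1) - f ((K:ℤ) + j))/(1-q))
        = ((f ((K:ℤ) + j + 1 + 1) - f ((K:ℤ) + j + 1)) - q*(f ((K:ℤ) + j + 1) - f ((K:ℤ) + j)))/(1-q) := by
      field_simp
      ring
    rw [h2]
    exact div_nonpos_of_nonpos_of_nonneg (by linarith) h1q.le
  have hΦle : ∀ j : ℕ, Φ j ≤ Φ 0 := by
    intro j
    induction j with
    | zero => exact le_refl _
    | succ j ih => exact le_trans (hΦanti j) ih
  have hbound : ∀ k : ℕ, f (k:ℤ) ≤ Φ 0 := by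
    intro k
    rcases le_or_gt k K with hk | hk
    · have : f (k:ℤ) ≤ f (K:ℤ) := hmono' _ _ (by omega)
      have h2 : f (K:ℤ) ≤ Φ 0 := by
        simp only [hΦ]
        have h3 := hmono (K:ℤ)
        have : 0 ≤ (f ((K:ℤ) + 1) - f (K:ℤ)) / (1 - q) := div_nonneg (by linarith) h1q.le
        simp only [Nat.cast_zero, add_zero] at *
        linarith
      linarith
    · obtain ⟨j, rfl⟩ : ∃ j : ℕ, k = K + j := ⟨k - K, by omega⟩
      have h2 : f ((K:ℤ) + j) ≤ Φ j := by
        simp only [hΦ]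
        have h3 := hmono ((K:ℤ) + j)
        have : 0 ≤ (f ((K:ℤ) + j + 1) - f ((K:ℤ) + j)) / (1 - q) := div_nonneg (by linarith) h1q.le
        linarith
      push_cast
      exact le_trans h2 (hΦle j)
  have hM : Monotone (fun k : ℕ => f (k:ℤ)) := by
    apply monotone_nat_of_le_succ
    intro k
    exact hmono' _ _ (by omega)
  have hbdd : BddAbove (Set.range (fun k : ℕ => f (k:ℤ))) := ⟨Φ 0, by rintro x ⟨k, rfl⟩; exact hbound k⟩
  refine ⟨⨆ k : ℕ, f (k:ℤ), tendsto_atTop_ciSup hM hbdd, fun k => le_ciSup hbdd k⟩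

lemma conv_bwd {f : ℤ → ℝ} {q : ℝ} (hq1 : q < 1) (J : ℕ)
    (hmono : ∀ i : ℤ, f i < f (i+1))
    (hdec : ∀ i : ℤ, i ≤ -(J:ℤ) → f i - f (i-1) ≤ q * (f (i+1) - f i)) :
    ∃ l, Tendsto (fun k : ℕ => f (-(k:ℤ))) atTop (nhds l) ∧ ∀ k : ℕ, l ≤ f (-(k:ℤ)) := by
  have hmono' := int_mono hmono
  have h1q : 0 < 1 - q := by linarith
  set Ψ : ℕ → ℝ := fun j => f (-(J:ℤ) - j) - (f (-(J:ℤ) - j) - f (-(J:ℤ) - j - 1)) / (1 - q) with hΨ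
  have hΨmono : ∀ j : ℕ, Ψ j ≤ Ψ (j+1) := by
    intro j
    have hd := hdec (-(J:ℤ) - j - 1) (by omega)
    have harr : -(J:ℤ) - j - 1 + 1 = -(J:ℤ) - j := by ring
    rw [harr] at hd
    simp only [hΨ]
    have hcast : -(J:ℤ) - ((j:ℤ)+1) = -(J:ℤ) - j - 1 := by ring
    push_cast
    rw [hcast]
    rw [← sub_nonneg]
    have h2 : f (-(J:ℤ) - j - 1) - (f (-(J:ℤ) - j - 1) - f (-(J:ℤ) - j - 1 - 1))/(1-q)
        - (f (-(J:ℤ) - j) - (f (-(J:ℤ) - j) - f (-(J:ℤ) - j - 1))/(1-q))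
        = (q*(f (-(J:ℤ) - j) - f (-(J:ℤ) - j - 1)) - (f (-(J:ℤ) - j - 1) - f (-(J:ℤ) - j - 1 - 1)))/(1-q) := by
      field_simp
      ring
    rw [h2]
    exact div_nonneg (by linarith) h1q.le
  have hΨle : ∀ j : ℕ, Ψ 0 ≤ Ψ j := by
    intro j
    induction j with
    | zero => exact le_refl _
    | succ j ih => exact le_trans ih (hΨmono j)
  have hbound : ∀ k : ℕ, Ψ 0 ≤ f (-(k:ℤ)) := by
    intro k
    rcases le_or_gt k J with hk | hk
    · have h1 : f (-(J:ℤ)) ≤ f (-(k:ℤ)) := hmono' _ _ (by omega)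
      have h2 : Ψ 0 ≤ f (-(J:ℤ)) := by
        simp only [hΨ]
        have h3 := hmono (-(J:ℤ) - 1)
        rw [show -(J:ℤ) - 1 + 1 = -(J:ℤ) by ring] at h3
        have h4 : 0 ≤ (f (-(J:ℤ) - 0) - f (-(J:ℤ) - 0 - 1)) / (1 - q) := div_nonneg (by push_cast; simp; linarith) h1q.le
        push_cast at *
        simp at *
        linarith
      linarith
    · obtain ⟨j, rfl⟩ : ∃ j : ℕ, k = J + j := ⟨k - J, by omega⟩
      have h2 : Ψ j ≤ f (-(J:ℤ) - j) := by
        simp only [hΨ]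
        have h3 := hmono (-(J:ℤ) - j - 1)
        rw [show -(J:ℤ) - j - 1 + 1 = -(J:ℤ) - j by ring] at h3
        have h4 : 0 ≤ (f (-(J:ℤ) - j) - f (-(J:ℤ) - j - 1)) / (1 - q) := div_nonneg (by linarith) h1q.le
        linarith
      have h5 : -((J:ℤ) + j) = -(J:ℤ) - j := by ring
      push_cast
      rw [h5]
      exact le_trans (hΨle j) h2
  have hA : Antitone (fun k : ℕ => f (-(k:ℤ))) := by
    apply antitone_nat_of_succ_le
    intro k
    exact hmono' _ _ (by omega)
  have hbdd : BddBelow (Set.range (fun k : ℕ => f (-(k:ℤ)))) := ⟨Ψ 0, by rintro x ⟨k, rfl⟩; exact hbound k⟩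
  refine ⟨⨅ k : ℕ, f (-(k:ℤ)), tendsto_atTop_ciInf hA hbdd, fun k => ciInf_le hbdd k⟩

lemma abmn_key (κ ρ : ℝ) (hκ0 : 0 < κ) (hκ1 : κ ≤ 1) (hρ : 0 < ρ)
    (a b m n : ℤ → ℝ) (h : ABMN κ ρ a b m n) (i : ℤ) :
    (b (i+1) / a (i+1)) * Rh κ ρ ((b (i+1) / a (i+1))^ρ) * Qh κ ρ ((b i / a i)^ρ)
      = (b i / a i) * Th κ ρ ((b i / a i)^ρ) * Ph κ ρ ((b (i+1) / a (i+1))^ρ) := by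
  have ha := h.1
  have hb := h.2.1
  have main := abmn_main κ ρ hκ0 hκ1 hρ a b m n h
  have hD : 0 < m (i+1) - m i := (main i).1
  have hE : 0 < n i - n (i+1) := by
    have := (main (i+1)).2.1
    rwa [show (i+1:ℤ) - 1 = i by ring] at this
  have h2 := (main i).2.2.2.2.2
  have h1 := (main (i+1)).2.2.2.2.1
  rw [show (i+1:ℤ) - 1 = i by ring] at h1
  have hstar : b (i+1) * Rh κ ρ ((b (i+1) / a (i+1))^ρ) * (a i * Qh κ ρ ((b i / a i)^ρ))
        * ((m (i+1) - m i) * (n i - n (i+1)))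
      = a (i+1) * Ph κ ρ ((b (i+1) / a (i+1))^ρ) * (b i * Th κ ρ ((b i / a i)^ρ))
        * ((m (i+1) - m i) * (n i - n (i+1))) := by
    linear_combination (a i * Qh κ ρ ((b i / a i)^ρ) * (n i - n (i+1))) * h1
      - (a (i+1) * Ph κ ρ ((b (i+1) / a (i+1))^ρ) * (n i - n (i+1))) * h2
  have hstar' := mul_right_cancel₀ (mul_pos hD hE).ne' hstar
  have hai := (ha i).ne'
  have hai1 := (ha (i+1)).ne'
  field_simp
  linear_combination hstar'

lemma abmn_tau_dec (κ ρ : ℝ) (hκ0 : 0 < κ) (hκ1 : κ ≤ 1) (hρ : 0 < ρ) (hρκ : ρ*κ ≤ 1)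
    (a b m n : ℤ → ℝ) (h : ABMN κ ρ a b m n) (i : ℤ) :
    b (i+1) / a (i+1) < b i / a i := by
  have ha := h.1
  have hb := h.2.1
  have hkey := abmn_key κ ρ hκ0 hκ1 hρ a b m n h i
  have hτ : 0 < b i / a i := div_pos (hb i) (ha i)
  have hτ' : 0 < b (i+1) / a (i+1) := div_pos (hb (i+1)) (ha (i+1))
  have ht : 0 < (b i / a i)^ρ := Real.rpow_pos_of_pos hτ ρ
  have ht' : 0 < (b (i+1) / a (i+1))^ρ := Real.rpow_pos_of_pos hτ' ρ
  have hPp : 0 < Ph κ ρ ((b (i+1) / a (i+1))^ρ) := Ph_pos hκ0 hκ1 hρκ ht'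
  have hQp : 0 < Qh κ ρ ((b i / a i)^ρ) := Qh_pos hκ0 hκ1 hρ ht
  have hPR : Ph κ ρ ((b (i+1) / a (i+1))^ρ) < Rh κ ρ ((b (i+1) / a (i+1))^ρ) := by
    unfold Ph Rh
    nlinarith [mul_pos (mul_pos hρ hκ0) ht']
  have hTQ : Th κ ρ ((b i / a i)^ρ) < Qh κ ρ ((b i / a i)^ρ) := by
    unfold Th Qh
    nlinarith [mul_pos (mul_pos hρ hκ0) ht]
  have h1 : b (i+1) / a (i+1) * Ph κ ρ ((b (i+1) / a (i+1))^ρ) * Qh κ ρ ((b i / a i)^ρ)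
      < b (i+1) / a (i+1) * Rh κ ρ ((b (i+1) / a (i+1))^ρ) * Qh κ ρ ((b i / a i)^ρ) := by
    have := mul_lt_mul_of_pos_left hPR hτ'
    exact mul_lt_mul_of_pos_right this hQp
  have h2 : b i / a i * Th κ ρ ((b i / a i)^ρ) * Ph κ ρ ((b (i+1) / a (i+1))^ρ)
      < b i / a i * Qh κ ρ ((b i / a i)^ρ) * Ph κ ρ ((b (i+1) / a (i+1))^ρ) := by
    have := mul_lt_mul_of_pos_left hTQ hτ
    exact mul_lt_mul_of_pos_right this hPp
  have h3 : b (i+1) / a (i+1) * (Ph κ ρ ((b (i+1) / a (i+1))^ρ) * Qh κ ρ ((b i / a i)^ρ))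
      < b i / a i * (Ph κ ρ ((b (i+1) / a (i+1))^ρ) * Qh κ ρ ((b i / a i)^ρ)) := by
    nlinarith [h1, h2, hkey]
  exact lt_of_mul_lt_mul_right (by linarith [h3]) (mul_pos hPp hQp).le

lemma key_limit_contra (κ ρ : ℝ) (hκ0 : 0 < κ) (hρ : 0 < ρ) (x y : ℕ → ℝ) (L : ℝ) (hL : 0 < L)
    (hx : Tendsto x atTop (nhds L)) (hy : Tendsto y atTop (nhds L))
    (hk : ∀ k, y k * Rh κ ρ ((y k)^ρ) * Qh κ ρ ((x k)^ρ)
      = x k * Th κ ρ ((x k)^ρ) * Ph κ ρ ((y k)^ρ)) : False := by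
  have hrpow : ContinuousAt (fun z : ℝ => z ^ ρ) L := Real.continuousAt_rpow_const L ρ (Or.inl hL.ne')
  have hxt : Tendsto (fun k => (x k)^ρ) atTop (nhds (L^ρ)) := hrpow.tendsto.comp hx
  have hyt : Tendsto (fun k => (y k)^ρ) atTop (nhds (L^ρ)) := hrpow.tendsto.comp hy
  have hRc : Continuous (fun s : ℝ => Rh κ ρ s) := by unfold Rh; continuity
  have hQc : Continuous (fun s : ℝ => Qh κ ρ s) := by unfold Qh; continuity
  have hTc : Continuous (fun s : ℝ => Th κ ρ s) := by unfold Th; continuity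
  have hPc : Continuous (fun s : ℝ => Ph κ ρ s) := by unfold Ph; continuity
  have hlhs : Tendsto (fun k => y k * Rh κ ρ ((y k)^ρ) * Qh κ ρ ((x k)^ρ)) atTop
      (nhds (L * Rh κ ρ (L^ρ) * Qh κ ρ (L^ρ))) :=
    (hy.mul (hRc.continuousAt.tendsto.comp hyt)).mul (hQc.continuousAt.tendsto.comp hxt)
  have hrhs : Tendsto (fun k => x k * Th κ ρ ((x k)^ρ) * Ph κ ρ ((y k)^ρ)) atTop
      (nhds (L * Th κ ρ (L^ρ) * Ph κ ρ (L^ρ))) :=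
    (hx.mul (hTc.continuousAt.tendsto.comp hxt)).mul (hPc.continuousAt.tendsto.comp hyt)
  have huniq : L * Rh κ ρ (L^ρ) * Qh κ ρ (L^ρ) = L * Th κ ρ (L^ρ) * Ph κ ρ (L^ρ) :=
    tendsto_nhds_unique (hlhs.congr (fun k => hk k)) hrhs
  have heq : Rh κ ρ (L^ρ) * Qh κ ρ (L^ρ) = Th κ ρ (L^ρ) * Ph κ ρ (L^ρ) := by
    apply mul_left_cancel₀ hL.ne'
    linear_combination huniq
  have hs : 0 < L^ρ := Real.rpow_pos_of_pos hL ρ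
  have hid : Rh κ ρ (L^ρ) * Qh κ ρ (L^ρ) - Th κ ρ (L^ρ) * Ph κ ρ (L^ρ)
      = 8*(ρ*κ*(L^ρ))*(1+(L^ρ))^2 := by
    unfold Ph Qh Rh Th; ring
  nlinarith [heq, hid, mul_pos (mul_pos (mul_pos hρ hκ0) hs) (by positivity : (0:ℝ) < (1+(L^ρ))^2)]

lemma fwd_bound {κ ρ s : ℝ} (hκ0 : 0 < κ) (hκ1 : κ ≤ 1) (hρ : 0 < ρ) (hρκ : ρ*κ ≤ 1)
    (hs : 0 < s) (hs1 : s ≤ 1) (hs9 : s ≤ κ/9) :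
    (2+κ) * Qh κ ρ s ≤ (2-κ) * Ph κ ρ s ∧ (2+κ) * Th κ ρ s ≤ (2-κ) * Rh κ ρ s := by
  have hu : ρ*κ*s ≤ s := mul_le_of_le_one_left hs.le hρκ
  have hv : κ*s ≤ s := mul_le_of_le_one_left hs.le hκ1
  have hss : s^2 ≤ s := by nlinarith
  have hw : κ*s^2 ≤ s := by nlinarith [sq_nonneg s]
  have hupos : 0 ≤ ρ*κ*s := by positivity
  constructor
  · unfold Ph Qh; nlinarith
  · unfold Th Rh; nlinarith

lemma bwd_bound {κ ρ s : ℝ} (hκ0 : 0 < κ) (hκ1 : κ ≤ 1) (hρ : 0 < ρ) (hρκ : ρ*κ ≤ 1)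
    (hs1 : 1 ≤ s) (hs9 : 9 ≤ κ*s) :
    (2+κ) * Ph κ ρ s ≤ (2-κ) * Qh κ ρ s ∧ (2+κ) * Rh κ ρ s ≤ (2-κ) * Th κ ρ s := by
  have hs : 0 < s := by linarith
  have hu : ρ*κ*s ≤ s := mul_le_of_le_one_left hs.le hρκ
  have hupos : 0 ≤ ρ*κ*s := by positivity
  have hks : 9*s ≤ κ*s^2 := by nlinarith [mul_le_mul_of_nonneg_right hs9 hs.le]
  constructor
  · unfold Ph Qh; nlinarith
  · unfold Rh Th; nlinarith

theorem stmt2 (κ ρ : ℝ) (hκ : κ ∈ Set.Ioc (0:ℝ) 1) (hρ : 0 < ρ) (hW : ρ ^ 2 * κ ≤ 1)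
    (a b m n : ℤ → ℝ) (h : ABMN κ ρ a b m n) :
    (∀ i : ℤ, m i < m (i + 1) ∧ n (i + 1) < n i) ∧
    ∃ mneg mpos nneg npos : ℝ,
      Tendsto (fun k : ℕ => m (-(k : ℤ))) atTop (nhds mneg) ∧
      Tendsto (fun k : ℕ => m (k : ℤ)) atTop (nhds mpos) ∧
      Tendsto (fun k : ℕ => n (-(k : ℤ))) atTop (nhds nneg) ∧
      Tendsto (fun k : ℕ => n (k : ℤ)) atTop (nhds npos) ∧
      mneg < mpos ∧ npos < nneg := by
  obtain ⟨hκ0, hκ1⟩ := hκ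
  have hρκ : ρ * κ ≤ 1 := rhok_le_one hκ0 hκ1 hρ hW
  have ha := h.1
  have hb := h.2.1
  have main := abmn_main κ ρ hκ0 hκ1 hρ a b m n h
  have hD : ∀ i : ℤ, 0 < m (i+1) - m i := fun i => (main i).1
  have hE : ∀ i : ℤ, 0 < n i - n (i+1) := by
    intro i
    have := (main (i+1)).2.1
    rwa [show (i+1:ℤ) - 1 = i by ring] at this
  refine ⟨fun i => ⟨by linarith [hD i], by linarith [hE i]⟩, ?_⟩
  have hτpos : ∀ i : ℤ, 0 < b i / a i := fun i => div_pos (hb i) (ha i)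
  have htpos : ∀ i : ℤ, 0 < (b i / a i)^ρ := fun i => Real.rpow_pos_of_pos (hτpos i) ρ
  have hτdec := abmn_tau_dec κ ρ hκ0 hκ1 hρ hρκ a b m n h
  -- forward limit of τ is 0
  have hFanti : Antitone (fun k : ℕ => b (k:ℤ) / a (k:ℤ)) := by
    apply antitone_nat_of_succ_le
    intro k
    have hstep := hτdec (k:ℤ)
    have hc : ((k+1:ℕ):ℤ) = (k:ℤ)+1 := by push_cast; ring
    simp only [hc]
    exact hstep.le
  have hFbdd : BddBelow (Set.range (fun k : ℕ => b (k:ℤ) / a (k:ℤ))) :=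
    ⟨0, by rintro x ⟨k, rfl⟩; exact (hτpos _).le⟩
  have hFlim : Tendsto (fun k : ℕ => b (k:ℤ) / a (k:ℤ)) atTop
      (nhds (⨅ k : ℕ, b (k:ℤ) / a (k:ℤ))) := tendsto_atTop_ciInf hFanti hFbdd
  have hL0 : 0 ≤ ⨅ k : ℕ, b (k:ℤ) / a (k:ℤ) := le_ciInf fun k => (hτpos _).le
  have hLzero : (⨅ k : ℕ, b (k:ℤ) / a (k:ℤ)) = 0 := by
    by_contra hne
    have hLpos : 0 < ⨅ k : ℕ, b (k:ℤ) / a (k:ℤ) := hL0.lt_of_ne (Ne.symm hne)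
    refine key_limit_contra κ ρ hκ0 hρ (fun k : ℕ => b (k:ℤ)/a (k:ℤ))
      (fun k : ℕ => b ((k:ℤ)+1)/a ((k:ℤ)+1)) _ hLpos hFlim ?_ ?_
    · have h2 := hFlim.comp (tendsto_add_atTop_nat 1)
      refine h2.congr ?_
      intro k
      simp only [Function.comp_apply]
      have hc : ((k+1:ℕ):ℤ) = (k:ℤ)+1 := by push_cast; ring
      rw [hc]
    · intro k
      exact abmn_key κ ρ hκ0 hκ1 hρ a b m n h (k:ℤ)
  rw [hLzero] at hFlim
  have htnd0 : Tendsto (fun k : ℕ => (b (k:ℤ)/a (k:ℤ))^ρ) atTop (nhds 0) := by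
    have hc0 : ContinuousAt (fun z : ℝ => z ^ ρ) 0 :=
      Real.continuousAt_rpow_const 0 ρ (Or.inr hρ.le)
    have h2 := hc0.tendsto.comp hFlim
    rwa [Real.zero_rpow hρ.ne'] at h2
  -- backward : τ(-k) → ∞
  have hGmono : Monotone (fun k : ℕ => b (-(k:ℤ)) / a (-(k:ℤ))) := by
    apply monotone_nat_of_le_succ
    intro k
    have hstep := hτdec (-(k:ℤ)-1)
    rw [show -(k:ℤ)-1+1 = -(k:ℤ) by ring] at hstep
    have hc : -((k+1:ℕ):ℤ) = -(k:ℤ)-1 := by push_cast; ring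
    simp only [hc]
    exact hstep.le
  have hGnb : ¬ BddAbove (Set.range (fun k : ℕ => b (-(k:ℤ)) / a (-(k:ℤ)))) := by
    intro hbdd
    have hGlim : Tendsto (fun k : ℕ => b (-(k:ℤ)) / a (-(k:ℤ))) atTop
        (nhds (⨆ k : ℕ, b (-(k:ℤ)) / a (-(k:ℤ)))) := tendsto_atTop_ciSup hGmono hbdd
    have hL'pos : 0 < ⨆ k : ℕ, b (-(k:ℤ)) / a (-(k:ℤ)) :=
      lt_of_lt_of_le (by simpa using hτpos 0) (le_ciSup hbdd 0)
    refine key_limit_contra κ ρ hκ0 hρ (fun k : ℕ => b (-(k:ℤ)-1)/a (-(k:ℤ)-1))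
      (fun k : ℕ => b (-(k:ℤ))/a (-(k:ℤ))) _ hL'pos ?_ hGlim ?_
    · have h2 := hGlim.comp (tendsto_add_atTop_nat 1)
      refine h2.congr ?_
      intro k
      simp only [Function.comp_apply]
      have hc : -((k+1:ℕ):ℤ) = -(k:ℤ)-1 := by push_cast; ring
      rw [hc]
    · intro k
      have h2 := abmn_key κ ρ hκ0 hκ1 hρ a b m n h (-(k:ℤ)-1)
      rwa [show -(k:ℤ)-1+1 = -(k:ℤ) by ring] at h2
  have hGtop : Tendsto (fun k : ℕ => b (-(k:ℤ)) / a (-(k:ℤ))) atTop atTop :=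
    tendsto_atTop_atTop_of_monotone' hGmono hGnb
  have htbig : Tendsto (fun k : ℕ => (b (-(k:ℤ)) / a (-(k:ℤ)))^ρ) atTop atTop :=
    (tendsto_rpow_atTop hρ).comp hGtop
  -- thresholds
  have hmin : (0:ℝ) < min 1 (κ/9) := by
    apply lt_min one_pos
    positivity
  obtain ⟨K, hK⟩ := eventually_atTop.mp (htnd0.eventually_lt_const hmin)
  obtain ⟨J, hJ⟩ := eventually_atTop.mp (htbig.eventually_ge_atTop (max 1 (9/κ)))
  have h2κ : (0:ℝ) < 2+κ := by linarith
  have hq1 : (2-κ)/(2+κ) < 1 := by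
    rw [div_lt_one h2κ]; linarith
  have hq0 : (0:ℝ) ≤ (2-κ)/(2+κ) := div_nonneg (by linarith) (by linarith)
  -- decay conditions
  have hdecm : ∀ i : ℤ, (K:ℤ) ≤ i → m (i+1) - m i ≤ (2-κ)/(2+κ) * (m i - m (i-1)) := by
    intro i hi
    have hi0 : 0 ≤ i := le_trans (Int.ofNat_nonneg K) hi
    have hik : ((i.toNat:ℕ):ℤ) = i := Int.toNat_of_nonneg hi0
    have hts := hK i.toNat (by omega)
    rw [hik] at hts
    have hbnd := fwd_bound hκ0 hκ1 hρ hρκ (htpos i)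
      (le_of_lt (lt_of_lt_of_le hts (min_le_left _ _)))
      (le_of_lt (lt_of_lt_of_le hts (min_le_right _ _)))
    have recm := (main i).2.2.1
    have hPp := Ph_pos hκ0 hκ1 hρκ (htpos i)
    have hD' : 0 < m i - m (i-1) := by
      have := hD (i-1)
      rwa [show (i-1:ℤ)+1 = i by ring] at this
    rw [div_mul_eq_mul_div, le_div_iff₀ h2κ]
    nlinarith [recm, mul_nonneg (sub_nonneg.mpr hbnd.1) hD'.le, hPp, hD']
  have hdecn : ∀ i : ℤ, (K:ℤ) ≤ i → n i - n (i+1) ≤ (2-κ)/(2+κ) * (n (i-1) - n i) := by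
    intro i hi
    have hi0 : 0 ≤ i := le_trans (Int.ofNat_nonneg K) hi
    have hik : ((i.toNat:ℕ):ℤ) = i := Int.toNat_of_nonneg hi0
    have hts := hK i.toNat (by omega)
    rw [hik] at hts
    have hbnd := fwd_bound hκ0 hκ1 hρ hρκ (htpos i)
      (le_of_lt (lt_of_lt_of_le hts (min_le_left _ _)))
      (le_of_lt (lt_of_lt_of_le hts (min_le_right _ _)))
    have recn := (main i).2.2.2.1
    have hRp := Rh_pos hκ0 hκ1 hρ (htpos i)
    have hE' : 0 < n (i-1) - n i := (main i).2.1
    rw [div_mul_eq_mul_div, le_div_iff₀ h2κ]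
    nlinarith [recn, mul_nonneg (sub_nonneg.mpr hbnd.2) hE'.le, hRp, hE']
  have hbwd_ts : ∀ i : ℤ, i ≤ -(J:ℤ) → 1 ≤ (b i / a i)^ρ ∧ 9 ≤ κ * (b i / a i)^ρ := by
    intro i hi
    have hik : (((-i).toNat:ℕ):ℤ) = -i := Int.toNat_of_nonneg (by omega)
    have hts := hJ (-i).toNat (by omega)
    rw [hik, show -(-i) = i by ring] at hts
    have h1 : (1:ℝ) ≤ (b i / a i)^ρ := le_trans (le_max_left _ _) hts
    have h9 : 9/κ ≤ (b i / a i)^ρ := le_trans (le_max_right _ _) hts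
    refine ⟨h1, ?_⟩
    rw [div_le_iff₀ hκ0] at h9
    linarith [h9]
  have hdecm' : ∀ i : ℤ, i ≤ -(J:ℤ) → m i - m (i-1) ≤ (2-κ)/(2+κ) * (m (i+1) - m i) := by
    intro i hi
    obtain ⟨h1, h9⟩ := hbwd_ts i hi
    have hbnd := bwd_bound hκ0 hκ1 hρ hρκ h1 h9
    have recm := (main i).2.2.1
    have hQp := Qh_pos hκ0 hκ1 hρ (htpos i)
    have hDi : 0 < m (i+1) - m i := hD i
    rw [div_mul_eq_mul_div, le_div_iff₀ h2κ]
    nlinarith [recm, mul_nonneg (sub_nonneg.mpr hbnd.1) hDi.le, hQp, hDi]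
  have hdecn' : ∀ i : ℤ, i ≤ -(J:ℤ) → n (i-1) - n i ≤ (2-κ)/(2+κ) * (n i - n (i+1)) := by
    intro i hi
    obtain ⟨h1, h9⟩ := hbwd_ts i hi
    have hbnd := bwd_bound hκ0 hκ1 hρ hρκ h1 h9
    have recn := (main i).2.2.2.1
    have hTp := Th_pos hκ0 hκ1 hρκ (htpos i)
    have hEi : 0 < n i - n (i+1) := hE i
    rw [div_mul_eq_mul_div, le_div_iff₀ h2κ]
    nlinarith [recn, mul_nonneg (sub_nonneg.mpr hbnd.2) hEi.le, hTp, hEi]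
  -- convergence
  obtain ⟨mpos, hmpos, hmle⟩ := conv_fwd hq0 hq1 K (fun i => by linarith [hD i]) hdecm
  obtain ⟨mneg, hmneg, hmge⟩ := conv_bwd hq1 J (fun i => by linarith [hD i]) hdecm'
  have hgmono : ∀ i : ℤ, -(n i) < -(n (i+1)) := fun i => by linarith [hE i]
  have hgdec : ∀ i : ℤ, (K:ℤ) ≤ i → -(n (i+1)) - -(n i) ≤ (2-κ)/(2+κ) * (-(n i) - -(n (i-1))) := by
    intro i hi
    have := hdecn i hi
    linarith
  have hgdec' : ∀ i : ℤ, i ≤ -(J:ℤ) → -(n i) - -(n (i-1)) ≤ (2-κ)/(2+κ) * (-(n (i+1)) - -(n i)) := by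
    intro i hi
    have := hdecn' i hi
    linarith
  obtain ⟨gpos, hgpos, hgle⟩ := conv_fwd (f := fun i => -(n i)) hq0 hq1 K hgmono hgdec
  obtain ⟨gneg, hgneg, hgge⟩ := conv_bwd (f := fun i => -(n i)) hq1 J hgmono hgdec'
  refine ⟨mneg, mpos, -gneg, -gpos, hmneg, hmpos, ?_, ?_, ?_, ?_⟩
  · have h2 := hgneg.neg
    simpa using h2
  · have h2 := hgpos.neg
    simpa using h2
  · -- mneg < mpos
    have h1 : mneg ≤ m 0 := by simpa using hmge 0
    have h2 : m 1 ≤ mpos := by simpa using hmle 1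
    have h3 := hD 0
    norm_num at h3
    linarith
  · -- npos < nneg : -gpos < -gneg
    have h1 : gneg ≤ -(n 0) := by simpa using hgge 0
    have h2 : -(n 1) ≤ gpos := by simpa using hgle 1
    have h3 := hE 0
    norm_num at h3
    linarith
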